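/- For any unicyclic non-König-Egerváry graph G (possibly disconnected), the critical difference satisfies d_c(G) = α(G) − μ(G). -/

import Mathlib

open Classical Finset

/-- Neighborhood of a set of vertices: all vertices adjacent to some vertex of `X`. -/
noncomputable def nbhd {V : Type*} (G : SimpleGraph V) [Fintype V] (X : Finset V) : Finset V :=
  Finset.univ.filter (fun v => ∃ x ∈ X, G.Adj x v)

/-- The difference `d(X) = |X| - |N(X)|`. -/
noncomputable def gdiff {V : Type*} (G : SimpleGraph V) [Fintype V] (X : Finset V) : ℤ :=
  (X.card : ℤ) - ((nbhd G X).card : ℤ)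

/-- `X` is an independent set of `G`. -/
def IsIndep {V : Type*} (G : SimpleGraph V) (X : Finset V) : Prop :=
  ∀ x ∈ X, ∀ y ∈ X, ¬ G.Adj x y

/-- The critical difference `d_c(G) = max { d(X) : X ⊆ V(G) }`. -/
noncomputable def critDiff {V : Type*} (G : SimpleGraph V) [Fintype V] : ℤ :=
  Finset.univ.powerset.sup' ⟨∅, Finset.empty_mem_powerset _⟩ (gdiff G)

/-- `X` is a critical set of `G`. -/
noncomputable def IsCritical {V : Type*} (G : SimpleGraph V) [Fintype V] (X : Finset V) : Prop :=
  gdiff G X = critDiff G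

/-- `ker G` : the intersection of all critical sets of `G`. -/
noncomputable def kerG {V : Type*} (G : SimpleGraph V) [Fintype V] : Finset V :=
  Finset.univ.filter (fun v => ∀ X : Finset V, IsCritical G X → v ∈ X)

/-- `diadem G` : the union of all critical independent sets of `G`. -/
noncomputable def diademG {V : Type*} (G : SimpleGraph V) [Fintype V] : Finset V :=
  Finset.univ.filter (fun v => ∃ X : Finset V, IsCritical G X ∧ IsIndep G X ∧ v ∈ X)

/-- The independence number `α(G)`. -/
noncomputable def alphaG {V : Type*} (G : SimpleGraph V) [Fintype V] : ℕ :=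
  (Finset.univ.powerset.filter (IsIndep G)).sup Finset.card

/-- `core G` : the intersection of all maximum independent sets of `G`. -/
noncomputable def coreG {V : Type*} (G : SimpleGraph V) [Fintype V] : Finset V :=
  Finset.univ.filter (fun v => ∀ I : Finset V, IsIndep G I → I.card = alphaG G → v ∈ I)

/-- `M` is a matching of `G`, given as a finite set of pairwise disjoint edges of `G`. -/
def IsMatchingF {V : Type*} (G : SimpleGraph V) (M : Finset (Sym2 V)) : Prop :=
  (↑M : Set (Sym2 V)) ⊆ G.edgeSet ∧
    ∀ e₁ ∈ M, ∀ e₂ ∈ M, e₁ ≠ e₂ → ∀ v : V, v ∈ e₁ → v ∉ e₂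

/-- The matching number `μ(G)`. -/
noncomputable def matchNum {V : Type*} (G : SimpleGraph V) [Fintype V] : ℕ :=
  ((Finset.univ : Finset (Finset (Sym2 V))).filter (IsMatchingF G)).sup Finset.card

/-- There is a matching from `A` into `B`: an injection of `A` into `B` along edges of `G`. -/
def MatchingFromInto {V : Type*} (G : SimpleGraph V) (A B : Finset V) : Prop :=
  ∃ f : V → V, Set.InjOn f ↑A ∧ ∀ a ∈ A, f a ∈ B ∧ G.Adj a (f a)

/-- The auxiliary bipartite graph `H_X` on vertex set `X ∪ N(X) ∪ {v, w}`, where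
`v = Sum.inr false` and `w = Sum.inr true`.  Its edges are the edges of `G` between
`X` and `N(X)`, the edge `vw`, and all edges from `v` to `N(X)`. -/
noncomputable def HX {V : Type*} (G : SimpleGraph V) [Fintype V] (X : Finset V) :
    SimpleGraph ({a : V // a ∈ X ∪ nbhd G X} ⊕ Bool) :=
  SimpleGraph.fromRel (fun p q =>
    match p, q with
    | Sum.inl a, Sum.inl b => a.1 ∈ X ∧ b.1 ∈ nbhd G X ∧ G.Adj a.1 b.1
    | Sum.inr false, Sum.inr true => True
    | Sum.inr false, Sum.inl b => b.1 ∈ nbhd G X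
    | _, _ => False)

/-- The copy of `X` inside the vertex set of `H_X`. -/
noncomputable def Xlift {V : Type*} (G : SimpleGraph V) [Fintype V] (X : Finset V) :
    Finset ({a : V // a ∈ X ∪ nbhd G X} ⊕ Bool) :=
  Finset.univ.filter (fun p => ∃ a : {a : V // a ∈ X ∪ nbhd G X}, p = Sum.inl a ∧ a.1 ∈ X)

/-- Edmonds–Gallai set `D`: vertices missed by some maximum matching. -/
noncomputable def gallaiD {V : Type*} (G : SimpleGraph V) [Fintype V] : Finset V :=
  Finset.univ.filter (fun v => ∃ M : Finset (Sym2 V),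
    IsMatchingF G M ∧ M.card = matchNum G ∧ ∀ e ∈ M, v ∉ e)

/-- Edmonds–Gallai set `A = N(D) - D`. -/
noncomputable def gallaiA {V : Type*} (G : SimpleGraph V) [Fintype V] : Finset V :=
  nbhd G (gallaiD G) \ gallaiD G

/-- Edmonds–Gallai set `C = V - A - D`. -/
noncomputable def gallaiC {V : Type*} (G : SimpleGraph V) [Fintype V] : Finset V :=
  (Finset.univ \ gallaiD G) \ gallaiA G

/-- The vertices of the singleton components of `G[D]`. -/
noncomputable def singlesD {V : Type*} (G : SimpleGraph V) [Fintype V] : Finset V :=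
  (gallaiD G).filter (fun v => ∀ w ∈ gallaiD G, ¬ G.Adj v w)

/-!
Leaves can be stripped: if `v` is a leaf with neighbour `w`, deleting the edges at `w` raises
`α` by one, lowers `μ` by one and raises `d_c` by two, so both `α + μ` and `d_c - (α - μ)` are
unchanged. Stripping leaves from a forest ends in an edgeless graph, so forests are
König–Egerváry. In a unicyclic graph, a leaf attached to the cycle leaves a forest behind, which
is excluded; so we reach a cycle of length `L` plus isolated vertices. There `d_c = n - L`
(every cycle vertex of `X` has its successor in `N(X)`), `μ ≥ ⌊L/2⌋` and
`α ≥ n - L + ⌊L/2⌋`; with `α + μ ≤ n - 1` this forces `L` odd and `α - μ = n - L`.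
-/

open SimpleGraph

section IndepMatching

variable {V : Type*} {G H : SimpleGraph V} {v w : V}

lemma IsIndep.anti {I : Finset V} (hle : H ≤ G) (hI : IsIndep G I) : IsIndep H I :=
  fun x hx y hy hxy ↦ hI x hx y hy (hle hxy)

lemma IsIndep.insert {I : Finset V} {c : V} (hI : IsIndep G I) (hc : ∀ y, ¬ G.Adj c y) :
    IsIndep G (insert c I) := by
  intro x hx y hy hxy
  rcases mem_insert.1 hx with rfl | hx
  · exact hc y hxy
  rcases mem_insert.1 hy with rfl | hy
  · exact hc x hxy.symm
  exact hI x hx y hy hxy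

lemma notMem_of_forall_not_adj {x : V} (hx : ∀ y, ¬ G.Adj x y) {e : Sym2 V}
    (he : e ∈ G.edgeSet) : x ∉ e := by
  induction e using Sym2.ind with
  | _ a b =>
    intro h
    rcases Sym2.mem_iff.1 h with rfl | rfl
    exacts [hx b he, hx a he.symm]

lemma not_adj_deleteIncidenceSet_self (y : V) :
    ¬ (G.deleteIncidenceSet w).Adj w y :=
  fun h ↦ (deleteIncidenceSet_adj.1 h).2.1 rfl

lemma not_adj_deleteIncidenceSet_of_leaf (hv : ∀ z, G.Adj v z → z = w) (y : V) :
    ¬ (G.deleteIncidenceSet w).Adj v y :=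
  fun h ↦ (deleteIncidenceSet_adj.1 h).2.2 (hv y (deleteIncidenceSet_adj.1 h).1)

lemma IsMatchingF.mono {M : Finset (Sym2 V)} (hle : H ≤ G) (hM : IsMatchingF H M) :
    IsMatchingF G M :=
  ⟨hM.1.trans (edgeSet_mono hle), hM.2⟩

lemma IsMatchingF.insert {M : Finset (Sym2 V)} {a b : V} (hM : IsMatchingF G M)
    (hab : G.Adj a b) (hfree : ∀ e ∈ M, a ∉ e ∧ b ∉ e) :
    IsMatchingF G (insert s(a, b) M) := by
  have hfree' : ∀ e ∈ M, ∀ x ∈ s(a, b), x ∉ e := by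
    intro e he x hx
    rcases Sym2.mem_iff.1 hx with rfl | rfl
    exacts [(hfree e he).1, (hfree e he).2]
  refine ⟨?_, ?_⟩
  · rw [coe_insert, Set.insert_subset_iff]
    exact ⟨hab, hM.1⟩
  intro e₁ h₁ e₂ h₂ hne x hx₁ hx₂
  rcases mem_insert.1 h₁ with rfl | h₁ <;> rcases mem_insert.1 h₂ with rfl | h₂
  · exact hne rfl
  · exact hfree' e₂ h₂ x hx₁ hx₂
  · exact hfree' e₁ h₁ x hx₂ hx₁
  · exact hM.2 e₁ h₁ e₂ h₂ hne x hx₁ hx₂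

lemma IsMatchingF.card_filter_mem_le_one {M : Finset (Sym2 V)} (hM : IsMatchingF G M) (x : V) :
    #(M.filter (x ∈ ·)) ≤ 1 :=
  card_le_one.2 fun e₁ h₁ e₂ h₂ ↦ by_contra fun hne ↦
    hM.2 e₁ (mem_filter.1 h₁).1 e₂ (mem_filter.1 h₂).1 hne x (mem_filter.1 h₁).2
      (mem_filter.1 h₂).2

end IndepMatching

section Numbers

variable {V : Type*} [Fintype V] {G : SimpleGraph V}

lemma mem_nbhd {X : Finset V} {z : V} : z ∈ nbhd G X ↔ ∃ x ∈ X, G.Adj x z := by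
  simp [nbhd]

lemma gdiff_le_critDiff (X : Finset V) : gdiff G X ≤ critDiff G :=
  le_sup' (gdiff G) (mem_powerset.2 (subset_univ X))

lemma exists_gdiff_eq_critDiff (G : SimpleGraph V) : ∃ X, gdiff G X = critDiff G := by
  obtain ⟨X, -, hX⟩ := exists_mem_eq_sup' ⟨∅, empty_mem_powerset _⟩ (gdiff G)
  exact ⟨X, hX.symm⟩

lemma nbhd_mono {X Y : Finset V} (h : X ⊆ Y) : nbhd G X ⊆ nbhd G Y := fun z hz ↦ by
  obtain ⟨x, hx, hxz⟩ := mem_nbhd.1 hz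
  exact mem_nbhd.2 ⟨x, h hx, hxz⟩

lemma critDiff_le_iff {d : ℤ} : critDiff G ≤ d ↔ ∀ X, gdiff G X ≤ d := by
  simp [critDiff]

lemma IsIndep.card_le_alphaG {I : Finset V} (hI : IsIndep G I) : #I ≤ alphaG G :=
  le_sup (by simp [hI])

lemma exists_isIndep_card_eq_alphaG (G : SimpleGraph V) :
    ∃ I, IsIndep G I ∧ #I = alphaG G := by
  obtain ⟨I, hI, h⟩ :=
    exists_mem_eq_sup (univ.powerset.filter (IsIndep G)) ⟨∅, by simp [IsIndep]⟩ card
  exact ⟨I, (mem_filter.1 hI).2, h.symm⟩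

lemma IsMatchingF.card_le_matchNum {M : Finset (Sym2 V)} (hM : IsMatchingF G M) :
    #M ≤ matchNum G :=
  le_sup (by simp [hM])

lemma exists_isMatchingF_card_eq_matchNum (G : SimpleGraph V) :
    ∃ M, IsMatchingF G M ∧ #M = matchNum G := by
  obtain ⟨M, hM, h⟩ :=
    exists_mem_eq_sup (univ.filter (IsMatchingF G)) ⟨∅, by simp [IsMatchingF]⟩ card
  exact ⟨M, (mem_filter.1 hM).2, h.symm⟩

/-- Every edge of a matching has an end outside a given independent set, and distinct edges
have distinct ends. -/
lemma alphaG_add_matchNum_le (G : SimpleGraph V) : alphaG G + matchNum G ≤ Fintype.card V := by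
  obtain ⟨I, hI, hIcard⟩ := exists_isIndep_card_eq_alphaG G
  obtain ⟨M, hM, hMcard⟩ := exists_isMatchingF_card_eq_matchNum G
  have hout : ∀ e ∈ M, ∃ x, x ∈ univ \ I ∧ x ∈ e := by
    intro e he
    induction e using Sym2.ind with
    | _ a b =>
      by_cases ha : a ∈ I
      · exact ⟨b, by simpa using fun hb ↦ hI a ha b hb (hM.1 he), Sym2.mem_mk_right a b⟩
      · exact ⟨a, by simpa using ha, Sym2.mem_mk_left a b⟩
  have hle : #M ≤ #(univ \ I) :=
    card_le_card_of_forall_subsingleton (fun e x ↦ x ∈ e) hout fun x _ e₁ h₁ e₂ h₂ ↦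
      by_contra fun hne ↦ hM.2 e₁ h₁.1 e₂ h₂.1 hne x h₁.2 h₂.2
  rw [card_sdiff_of_subset (subset_univ I), card_univ] at hle
  have := card_le_univ I
  omega

end Numbers

section Leaf

variable {V : Type*} [Fintype V] {G : SimpleGraph V} {v w : V}

lemma nbhd_deleteIncidenceSet (X : Finset V) :
    nbhd (G.deleteIncidenceSet w) X = (nbhd G (X.erase w)).erase w := by
  ext z
  simp only [mem_nbhd, mem_erase, deleteIncidenceSet_adj]
  constructor
  · rintro ⟨x, hx, hxz, hxw, hzw⟩
    exact ⟨hzw, x, ⟨hxw, hx⟩, hxz⟩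
  · rintro ⟨hzw, x, ⟨hxw, hx⟩, hxz⟩
    exact ⟨x, hx, hxz, hxw, hzw⟩

lemma nbhd_insert_leaf (hvw : G.Adj v w) (hv : ∀ z, G.Adj v z → z = w) (X : Finset V) :
    nbhd G (insert v X) = insert w (nbhd G X) := by
  ext z
  simp only [mem_nbhd, mem_insert, exists_eq_or_imp]
  exact or_congr ⟨hv z, fun h ↦ h ▸ hvw⟩ Iff.rfl

lemma alphaG_deleteIncidenceSet (hvw : G.Adj v w) (hv : ∀ z, G.Adj v z → z = w) :
    alphaG (G.deleteIncidenceSet w) = alphaG G + 1 := by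
  apply le_antisymm
  · obtain ⟨I, hI, hcard⟩ := exists_isIndep_card_eq_alphaG (G.deleteIncidenceSet w)
    have hindep : IsIndep G (I.erase w) := fun x hx y hy hxy ↦
      hI x (mem_of_mem_erase hx) y (mem_of_mem_erase hy)
        (deleteIncidenceSet_adj.2 ⟨hxy, ne_of_mem_erase hx, ne_of_mem_erase hy⟩)
    have := hindep.card_le_alphaG
    have := pred_card_le_card_erase (s := I) (a := w)
    omega
  · obtain ⟨I, hI, hcard⟩ := exists_isIndep_card_eq_alphaG G
    obtain ⟨c, hcI, hc⟩ : ∃ c ∉ I, ∀ y, ¬ (G.deleteIncidenceSet w).Adj c y := by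
      by_cases hvI : v ∈ I
      · exact ⟨w, fun hwI ↦ hI v hvI w hwI hvw, not_adj_deleteIncidenceSet_self⟩
      · exact ⟨v, hvI, not_adj_deleteIncidenceSet_of_leaf hv⟩
    have := ((hI.anti (deleteIncidenceSet_le G w)).insert hc).card_le_alphaG
    rw [card_insert_of_notMem hcI] at this
    omega

lemma matchNum_deleteIncidenceSet (hvw : G.Adj v w) (hv : ∀ z, G.Adj v z → z = w) :
    matchNum G = matchNum (G.deleteIncidenceSet w) + 1 := by
  apply le_antisymm
  · obtain ⟨M, hM, hcard⟩ := exists_isMatchingF_card_eq_matchNum G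
    have hM' : IsMatchingF (G.deleteIncidenceSet w) (M.filter (w ∉ ·)) := by
      refine ⟨fun e he ↦ ?_, fun e₁ h₁ e₂ h₂ ↦
        hM.2 e₁ (mem_filter.1 h₁).1 e₂ (mem_filter.1 h₂).1⟩
      rw [mem_coe, mem_filter] at he
      exact (edgeSet_deleteIncidenceSet G w).symm ▸ ⟨hM.1 he.1, fun h ↦ he.2 h.2⟩
    have := hM'.card_le_matchNum
    have := hM.card_filter_mem_le_one w
    have := card_filter_add_card_filter_not (s := M) (p := (w ∈ ·))
    omega
  · obtain ⟨M, hM, hcard⟩ := exists_isMatchingF_card_eq_matchNum (G.deleteIncidenceSet w)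
    have hfree : ∀ e ∈ M, v ∉ e ∧ w ∉ e := by
      intro e he
      have hedge := hM.1 he
      exact ⟨notMem_of_forall_not_adj (not_adj_deleteIncidenceSet_of_leaf hv) hedge,
        notMem_of_forall_not_adj not_adj_deleteIncidenceSet_self hedge⟩
    have hnew : s(v, w) ∉ M := fun h ↦ (hfree _ h).1 (Sym2.mem_mk_left v w)
    have := ((hM.mono (deleteIncidenceSet_le G w)).insert hvw hfree).card_le_matchNum
    rw [card_insert_of_notMem hnew] at this
    omega

lemma card_sub_card_erase_le_critDiff (hvw : G.Adj v w) (hv : ∀ z, G.Adj v z → z = w)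
    {Y : Finset V} (hvY : v ∉ Y) : (#Y : ℤ) - #((nbhd G Y).erase w) ≤ critDiff G := by
  by_cases hw : w ∈ nbhd G Y
  · have h := gdiff_le_critDiff (G := G) (insert v Y)
    rw [gdiff, nbhd_insert_leaf hvw hv, insert_eq_of_mem hw, card_insert_of_notMem hvY] at h
    have := card_pos.2 ⟨w, hw⟩
    rw [card_erase_of_mem hw]
    omega
  · rw [erase_eq_of_notMem hw]
    exact gdiff_le_critDiff Y

lemma gdiff_le_gdiff_erase (hvw : G.Adj v w) (hv : ∀ z, G.Adj v z → z = w) (X : Finset V) :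
    gdiff G X ≤ gdiff G (X.erase w) := by
  by_cases hwX : w ∈ X
  · have hv' : v ∉ nbhd G (X.erase w) := fun h ↦ by
      obtain ⟨x, hx, hxv⟩ := mem_nbhd.1 h
      exact ne_of_mem_erase hx (hv x hxv.symm)
    have hsub : insert v (nbhd G (X.erase w)) ⊆ nbhd G X :=
      insert_subset (mem_nbhd.2 ⟨w, hwX, hvw.symm⟩) (nbhd_mono (erase_subset w X))
    have := card_le_card hsub
    rw [card_insert_of_notMem hv'] at this
    have := card_erase_of_mem hwX
    have := card_pos.2 ⟨w, hwX⟩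
    unfold gdiff
    omega
  · rw [erase_eq_of_notMem hwX]

lemma gdiff_add_two_le (hvw : G.Adj v w) (hv : ∀ z, G.Adj v z → z = w) {X : Finset V}
    (hwX : w ∉ X) :
    gdiff G X + 2 ≤ gdiff (G.deleteIncidenceSet w) (insert v (insert w X)) := by
  have hnb : nbhd (G.deleteIncidenceSet w) (insert v (insert w X)) = (nbhd G X).erase w := by
    rw [nbhd_deleteIncidenceSet, erase_insert_of_ne hvw.ne, erase_insert hwX,
      nbhd_insert_leaf hvw hv, erase_insert_eq_erase]
  rw [gdiff, gdiff, hnb]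
  by_cases hvX : v ∈ X
  · have hw : w ∈ nbhd G X := mem_nbhd.2 ⟨v, hvX, hvw⟩
    have := card_pos.2 ⟨w, hw⟩
    rw [insert_eq_of_mem (mem_insert_of_mem hvX), card_insert_of_notMem hwX,
      card_erase_of_mem hw]
    omega
  · rw [card_insert_of_notMem (by simp [hvw.ne, hvX]), card_insert_of_notMem hwX]
    have := card_erase_le (s := nbhd G X) (a := w)
    omega

lemma critDiff_deleteIncidenceSet (hvw : G.Adj v w) (hv : ∀ z, G.Adj v z → z = w) :
    critDiff (G.deleteIncidenceSet w) = critDiff G + 2 := by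
  apply le_antisymm
  · refine critDiff_le_iff.2 fun X ↦ ?_
    have hnb :
        #((nbhd G ((X.erase w).erase v)).erase w) ≤ #(nbhd (G.deleteIncidenceSet w) X) := by
      rw [nbhd_deleteIncidenceSet]
      exact card_le_card (erase_subset_erase w (nbhd_mono (erase_subset v _)))
    have := pred_card_le_card_erase (s := X) (a := w)
    have := pred_card_le_card_erase (s := X.erase w) (a := v)
    have := card_sub_card_erase_le_critDiff hvw hv (notMem_erase v (X.erase w))
    unfold gdiff
    omega
  · obtain ⟨X, hX⟩ := exists_gdiff_eq_critDiff G
    calc critDiff G + 2 ≤ gdiff G (X.erase w) + 2 := by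
          rw [← hX]; exact add_le_add_left (gdiff_le_gdiff_erase hvw hv X) 2
      _ ≤ gdiff (G.deleteIncidenceSet w) (insert v (insert w (X.erase w))) :=
          gdiff_add_two_le hvw hv (notMem_erase w X)
      _ ≤ critDiff (G.deleteIncidenceSet w) := gdiff_le_critDiff _

end Leaf

section Forest

variable {V : Type*} [Fintype V] {G : SimpleGraph V}

lemma SimpleGraph.IsAcyclic.exists_isPath_leaves (hG : G.IsAcyclic) {a b : V} (hab : G.Adj a b) :
    ∃ (x y : V) (p : G.Walk x y), p.IsPath ∧ ¬ p.Nil ∧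
      (∀ z, G.Adj x z → z = p.snd) ∧ (∀ z, G.Adj y z → z = p.penultimate) := by
  have : Nonempty V := ⟨a⟩
  obtain ⟨x, y, p, hp, hmax⟩ := Walk.exists_isPath_forall_isPath_length_le_length G
  have hnil : ¬ p.Nil := by
    have := hmax a b hab.toWalk hab.isPath_toWalk
    rw [← Walk.length_eq_zero_iff]
    simp only [Walk.length_cons, Walk.length_nil] at this
    omega
  refine ⟨x, y, p, hp, hnil, fun z hz ↦ hG.eq_snd_of_adj_start hp hz ?_,
    fun z hz ↦ hG.eq_penultimate_of_adj_end hp hz ?_⟩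
  · by_contra hzp
    have := hmax _ _ _ (hp.cons hzp (h := hz.symm))
    simp at this
  · by_contra hzp
    have := hmax _ _ _ (hp.concat hzp hz)
    simp at this

lemma ncard_edgeSet_deleteIncidenceSet_lt {v w : V} (hvw : G.Adj v w) :
    (G.deleteIncidenceSet w).edgeSet.ncard < G.edgeSet.ncard := by
  refine Set.ncard_lt_ncard
    ((Set.ssubset_iff_of_subset (edgeSet_mono (deleteIncidenceSet_le G w))).2 ⟨s(v, w), hvw, ?_⟩)
  rw [edgeSet_deleteIncidenceSet]
  exact fun h ↦ h.2 ⟨hvw, Sym2.mem_mk_right v w⟩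

lemma alphaG_add_matchNum_of_forall_not_adj (h : ∀ a b, ¬ G.Adj a b) :
    alphaG G + matchNum G = Fintype.card V := by
  have := (show IsIndep G univ from fun x _ y _ ↦ h x y).card_le_alphaG
  have := alphaG_add_matchNum_le G
  rw [card_univ] at *
  omega

end Forest

theorem SimpleGraph.IsAcyclic.alphaG_add_matchNum {V : Type*} [Fintype V] {G : SimpleGraph V}
    (hG : G.IsAcyclic) : alphaG G + matchNum G = Fintype.card V := by
  by_cases hE : ∃ a b, G.Adj a b
  · obtain ⟨a, b, hab⟩ := hE
    obtain ⟨x, _, p, -, hnil, hx, -⟩ := hG.exists_isPath_leaves hab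
    have hxw := p.adj_snd hnil
    have := ncard_edgeSet_deleteIncidenceSet_lt hxw
    have := (hG.anti (deleteIncidenceSet_le G p.snd)).alphaG_add_matchNum
    rw [alphaG_deleteIncidenceSet hxw hx] at this
    rw [matchNum_deleteIncidenceSet hxw hx]
    omega
  · simp only [not_exists] at hE
    exact alphaG_add_matchNum_of_forall_not_adj hE
termination_by G.edgeSet.ncard

section Cycle

open Walk

variable {V : Type*} {G : SimpleGraph V} {u : V} {C : G.Walk u u}

lemma SimpleGraph.Walk.IsCycle.getVert_inj (hC : C.IsCycle) {i j : ℕ} (hi : i < C.length)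
    (hj : j < C.length) (h : C.getVert i = C.getVert j) : i = j :=
  hC.getVert_injOn' (by simp only [Set.mem_ofPred_eq]; omega)
    (by simp only [Set.mem_ofPred_eq]; omega) h

lemma SimpleGraph.Walk.IsCycle.image_getVert (hC : C.IsCycle) :
    (range C.length).image C.getVert = C.support.toFinset := by
  ext a
  simp only [mem_image, mem_range, List.mem_toFinset]
  refine ⟨fun ⟨i, _, hi⟩ ↦ hi ▸ C.getVert_mem_support i, fun ha ↦ ?_⟩
  obtain ⟨i, rfl, hi⟩ := mem_support_iff_exists_getVert.1 ha
  rcases hi.lt_or_eq with hi | rfl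
  · exact ⟨i, hi, rfl⟩
  · exact ⟨0, by have := hC.three_le_length; omega, by rw [getVert_zero, getVert_length]⟩

lemma SimpleGraph.Walk.IsCycle.card_support_toFinset (hC : C.IsCycle) :
    #C.support.toFinset = C.length := by
  rw [← hC.image_getVert, card_image_of_injOn fun i hi j hj ↦ hC.getVert_inj
    (mem_range.1 hi) (mem_range.1 hj), card_range]

variable [Fintype V]

lemma SimpleGraph.Walk.IsCycle.card_inter_le_card_nbhd (hC : C.IsCycle) (X : Finset V) :
    #(X ∩ C.support.toFinset) ≤ #(nbhd G X) :=
  calc #(X ∩ C.support.toFinset)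
      ≤ #(((range C.length).filter (C.getVert · ∈ X)).image C.getVert) := by
        refine card_le_card fun a ha ↦ ?_
        rw [mem_inter, ← hC.image_getVert, mem_image] at ha
        obtain ⟨haX, i, hi, rfl⟩ := ha
        exact mem_image_of_mem _ (mem_filter.2 ⟨hi, haX⟩)
    _ ≤ #((range C.length).filter (C.getVert · ∈ X)) := card_image_le
    _ ≤ #(nbhd G X) := by
        refine card_le_card_of_injOn (fun i ↦ C.getVert (i + 1)) (fun i hi ↦ ?_)
          fun i hi j hj h ↦ ?_
        · rw [coe_filter, Set.mem_ofPred_eq, mem_range] at hi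
          exact mem_nbhd.2 ⟨_, hi.2, C.adj_getVert_succ hi.1⟩
        · rw [coe_filter, Set.mem_ofPred_eq, mem_range] at hi hj
          have := hC.getVert_injOn (by simp only [Set.mem_ofPred_eq]; omega)
            (by simp only [Set.mem_ofPred_eq]; omega) h
          omega

/-- Every other edge of the cycle. -/
lemma SimpleGraph.Walk.IsCycle.length_div_two_le_matchNum (hC : C.IsCycle) :
    C.length / 2 ≤ matchNum G := by
  set M := (range (C.length / 2)).image fun i ↦ s(C.getVert (2 * i), C.getVert (2 * i + 1))
  have hedge : ∀ {i j a b}, i < C.length / 2 → j < C.length / 2 → a / 2 = i → b / 2 = j →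
      C.getVert a = C.getVert b → i = j := fun hi hj ha hb h ↦ by
    have := hC.getVert_inj (by omega) (by omega) h
    omega
  have hM : IsMatchingF G M := by
    refine ⟨fun e he ↦ ?_, fun e₁ h₁ e₂ h₂ hne x hx₁ hx₂ ↦ ?_⟩
    · obtain ⟨i, hi, rfl⟩ := mem_image.1 he
      exact C.adj_getVert_succ (by rw [mem_range] at hi; omega)
    obtain ⟨i, hi, rfl⟩ := mem_image.1 h₁
    obtain ⟨j, hj, rfl⟩ := mem_image.1 h₂
    rw [mem_range] at hi hj
    refine hne ?_
    rcases Sym2.mem_iff.1 hx₁ with rfl | rfl <;> rcases Sym2.mem_iff.1 hx₂ with h | h <;>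
      rw [hedge hi hj (by omega) (by omega) h]
  have hcard : #M = C.length / 2 := by
    refine (card_image_of_injOn fun i hi j hj h ↦ ?_).trans (card_range _)
    rw [coe_range, Set.mem_Iio] at hi hj
    rcases Sym2.eq_iff.1 h with ⟨h, -⟩ | ⟨h, -⟩ <;>
      exact hedge hi hj (by omega) (by omega) h
  exact hcard ▸ hM.card_le_matchNum

lemma SimpleGraph.Walk.IsCycle.length_le_card (hC : C.IsCycle) : C.length ≤ Fintype.card V :=
  hC.card_support_toFinset ▸ card_le_univ _

lemma critDiff_eq_of_forall_adj_mem_edges (hC : C.IsCycle)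
    (hE : ∀ a b, G.Adj a b → s(a, b) ∈ C.edges) :
    critDiff G = Fintype.card V - C.length := by
  have hS : #(univ \ C.support.toFinset) = Fintype.card V - C.length := by
    rw [card_sdiff_of_subset (subset_univ _), card_univ, hC.card_support_toFinset]
  have := hC.length_le_card
  apply le_antisymm
  · refine critDiff_le_iff.2 fun X ↦ ?_
    have := hC.card_inter_le_card_nbhd X
    have := card_inter_add_card_sdiff X C.support.toFinset
    have : #(X \ C.support.toFinset) ≤ #(univ \ C.support.toFinset) :=
      card_le_card (sdiff_subset_sdiff (subset_univ X) subset_rfl)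
    unfold gdiff
    omega
  · have hN : nbhd G (univ \ C.support.toFinset) = ∅ := by
      refine eq_empty_of_forall_notMem fun z hz ↦ ?_
      obtain ⟨x, hx, hxz⟩ := mem_nbhd.1 hz
      exact (mem_sdiff.1 hx).2 (List.mem_toFinset.2 (C.fst_mem_support_of_mem_edges (hE x z hxz)))
    have := gdiff_le_critDiff (G := G) (univ \ C.support.toFinset)
    rw [gdiff, hN, hS] at this
    simp only [card_empty, Nat.cast_zero, sub_zero] at this
    omega

/-- Every other vertex of the cycle, together with the isolated vertices. -/
lemma card_sub_length_add_le_alphaG (hC : C.IsCycle)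
    (hE : ∀ a b, G.Adj a b → s(a, b) ∈ C.edges) :
    Fintype.card V - C.length + C.length / 2 ≤ alphaG G := by
  set S := C.support.toFinset
  set J := (range (C.length / 2)).image fun i ↦ C.getVert (2 * i + 1)
  have hJS : J ⊆ S := fun x hx ↦ by
    obtain ⟨i, -, rfl⟩ := mem_image.1 hx
    exact List.mem_toFinset.2 (C.getVert_mem_support _)
  have hJ : #J = C.length / 2 := by
    refine (card_image_of_injOn fun i hi j hj h ↦ ?_).trans (card_range _)
    rw [coe_range, Set.mem_Iio] at hi hj
    have := hC.getVert_inj (by omega) (by omega) h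
    omega
  have hmemJ : ∀ {x y}, G.Adj x y → x ∈ J ∪ (univ \ S) → x ∈ J := fun hxy hx ↦
    (mem_union.1 hx).resolve_right fun h ↦ (mem_sdiff.1 h).2
      (List.mem_toFinset.2 (C.fst_mem_support_of_mem_edges (hE _ _ hxy)))
  have hI : IsIndep G (J ∪ (univ \ S)) := by
    intro x hx y hy hxy
    obtain ⟨i, hi, rfl⟩ := mem_image.1 (hmemJ hxy hx)
    obtain ⟨j, hj, rfl⟩ := mem_image.1 (hmemJ hxy.symm hy)
    rw [mem_range] at hi hj
    obtain ⟨k, hk, he⟩ := (mk_mem_edges_iff_exists C).1 (hE _ _ hxy)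
    -- the two ends of an edge of the cycle have indices of different parity
    have hodd : ∀ {a b}, a < C.length / 2 → b < C.length / 2 →
        C.getVert k = C.getVert (2 * a + 1) → C.getVert (k + 1) = C.getVert (2 * b + 1) →
        False := fun ha hb h₁ h₂ ↦ by
      have := hC.getVert_injOn (by simp only [Set.mem_ofPred_eq]; omega)
        (by simp only [Set.mem_ofPred_eq]; omega) h₂
      have := hC.getVert_inj (by omega) (by omega) h₁
      omega
    rcases Sym2.eq_iff.1 he with ⟨h₁, h₂⟩ | ⟨h₁, h₂⟩
    exacts [hodd hi hj h₁ h₂, hodd hj hi h₁ h₂]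
  have := hI.card_le_alphaG
  rw [card_union_of_disjoint (disjoint_sdiff.mono_left hJS), hJ, card_sdiff_of_subset
    (subset_univ S), card_univ, hC.card_support_toFinset] at this
  omega

/-- A non-König–Egerváry cycle is odd, and then `α` and `μ` are forced by the lower bounds. -/
lemma critDiff_eq_alphaG_sub_matchNum_of_forall_adj_mem_edges (hC : C.IsCycle)
    (hE : ∀ a b, G.Adj a b → s(a, b) ∈ C.edges)
    (hKE : alphaG G + matchNum G ≠ Fintype.card V) : critDiff G = alphaG G - matchNum G := by
  have := critDiff_eq_of_forall_adj_mem_edges hC hE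
  have := card_sub_length_add_le_alphaG hC hE
  have := hC.length_div_two_le_matchNum
  have := alphaG_add_matchNum_le G
  have := hC.length_le_card
  omega

end Cycle

section Unicyclic

open Walk

variable {V : Type*} {G H : SimpleGraph V} {u : V}

def SimpleGraph.Walk.IsOnlyCycle (C : G.Walk u u) : Prop :=
  C.IsCycle ∧
    ∀ ⦃v : V⦄ (D : G.Walk v v), D.IsCycle → ∀ e, e ∈ D.edges ↔ e ∈ C.edges

variable {C : G.Walk u u}

lemma SimpleGraph.Walk.IsOnlyCycle.transfer (hC : C.IsOnlyCycle) (hle : H ≤ G)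
    (hCH : ∀ e ∈ C.edges, e ∈ H.edgeSet) : (C.transfer H hCH).IsOnlyCycle := by
  refine ⟨hC.1.transfer hCH, fun v D hD e ↦ ?_⟩
  rw [edges_transfer, ← hC.2 (D.mapLe hle) (hD.mapLe hle), edges_mapLe_eq_edges]

lemma SimpleGraph.Walk.IsOnlyCycle.isAcyclic_deleteIncidenceSet (hC : C.IsOnlyCycle) {w : V}
    (hw : w ∈ C.support) : (G.deleteIncidenceSet w).IsAcyclic := by
  intro v D hD
  obtain ⟨e, he, hwe⟩ := (mem_support_iff_exists_mem_edges_of_not_nil hC.1.not_nil).1 hw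
  have hle := deleteIncidenceSet_le G w
  have heD := (hC.2 (D.mapLe hle) (hD.mapLe hle) e).2 he
  rw [edges_mapLe_eq_edges] at heD
  have := D.edges_subset_edgeSet heD
  rw [edgeSet_deleteIncidenceSet] at this
  exact this.2 ⟨C.edges_subset_edgeSet he, hwe⟩

lemma SimpleGraph.Walk.IsOnlyCycle.isAcyclic_deleteEdges (hC : C.IsOnlyCycle) :
    (G.deleteEdges {e | e ∈ C.edges}).IsAcyclic := by
  intro v D hD
  have hle := deleteEdges_le (G := G) {e | e ∈ C.edges}
  obtain ⟨e, he⟩ := List.exists_mem_of_ne_nil _ (edges_eq_nil.not.2 hD.not_nil)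
  have := D.edges_subset_edgeSet he
  rw [edgeSet_deleteEdges] at this
  refine this.2 ((hC.2 (D.mapLe hle) (hD.mapLe hle) e).1 ?_)
  rwa [edges_mapLe_eq_edges]

/-- An edge `xz` off the cycle is a bridge, so no walk from `z` may return to the cycle
while avoiding `x`. -/
lemma SimpleGraph.Walk.IsOnlyCycle.mem_edges_of_walk (hC : C.IsOnlyCycle) {x y z : V}
    (hxz : G.Adj x z) (hx : x ∈ C.support) (hy : y ∈ C.support) (q : G.Walk z y)
    (hxq : x ∉ q.support) : s(x, z) ∈ C.edges := by
  by_contra hxzC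
  have hbridge : G.IsBridge s(x, z) :=
    (isBridge_iff_forall_cycle_notMem hxz).2 fun _ D hD he ↦ hxzC ((hC.2 D hD _).1 he)
  have h := isBridge_iff_forall_walk_mem_edges.1 hbridge
    (((C.takeUntil x hx).reverse.append (C.takeUntil y hy)).append q.reverse)
  simp only [edges_append, edges_reverse, List.mem_append, List.mem_reverse] at h
  rcases h with (h | h) | h
  · exact hxzC (C.edges_takeUntil_subset_edges hx h)
  · exact hxzC (C.edges_takeUntil_subset_edges hy h)
  · exact hxq (q.fst_mem_support_of_mem_edges h)

/-- Without leaves, every edge lies on the cycle: otherwise a longest path among the edges off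
the cycle ends at two vertices of the cycle, and its first edge is not a bridge. -/
lemma SimpleGraph.Walk.IsOnlyCycle.adj_mem_edges [Fintype V] (hC : C.IsOnlyCycle)
    (hleaf : ∀ x z, G.Adj x z → ∃ z', G.Adj x z' ∧ z' ≠ z) {a b : V} (hab : G.Adj a b) :
    s(a, b) ∈ C.edges := by
  by_contra habC
  set H := G.deleteEdges {e | e ∈ C.edges}
  have hHadj : ∀ {x y}, H.Adj x y ↔ G.Adj x y ∧ s(x, y) ∉ C.edges := by
    simp [H, deleteEdges_adj]
  obtain ⟨x, y, p, hp, hnil, hx, hy⟩ :=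
    hC.isAcyclic_deleteEdges.exists_isPath_leaves (hHadj.2 ⟨hab, habC⟩)
  have hend : ∀ {x z}, (∀ z', H.Adj x z' → z' = z) → G.Adj x z → x ∈ C.support :=
    fun hx hxz ↦ by_contra fun hxC ↦ by
      obtain ⟨z', hxz', hne⟩ := hleaf _ _ hxz
      exact hne (hx z' (hHadj.2 ⟨hxz', fun h ↦ hxC (C.fst_mem_support_of_mem_edges h)⟩))
  obtain ⟨hxs, hxsC⟩ := hHadj.1 (p.adj_snd hnil)
  have hxp : x ∉ p.tail.support := by
    have := hp
    rw [← p.cons_tail_eq hnil, cons_isPath_iff] at this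
    exact this.2
  have hyC := hend hy (hHadj.1 (p.adj_penultimate hnil)).1.symm
  exact hxsC (hC.mem_edges_of_walk hxs (hend hx hxs) hyC (p.tail.mapLe (deleteEdges_le _))
    (by rwa [support_mapLe_eq_support]))

end Unicyclic

theorem SimpleGraph.Walk.IsOnlyCycle.critDiff_eq {V : Type*} [Fintype V] {G : SimpleGraph V}
    {u : V} {C : G.Walk u u} (hC : C.IsOnlyCycle) (hKE : alphaG G + matchNum G ≠ Fintype.card V) :
    critDiff G = alphaG G - matchNum G := by
  by_cases hleaf : ∃ v w, G.Adj v w ∧ ∀ z, G.Adj v z → z = w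
  · obtain ⟨v, w, hvw, hv⟩ := hleaf
    have hα := alphaG_deleteIncidenceSet hvw hv
    have hμ := matchNum_deleteIncidenceSet hvw hv
    by_cases hw : w ∈ C.support
    · have := (hC.isAcyclic_deleteIncidenceSet hw).alphaG_add_matchNum
      omega
    · have hCw : ∀ e ∈ C.edges, e ∈ (G.deleteIncidenceSet w).edgeSet := fun e he ↦ by
        rw [edgeSet_deleteIncidenceSet]
        exact ⟨C.edges_subset_edgeSet he, fun h ↦ hw (C.mem_support_of_mem_edges he h.2)⟩
      have := ncard_edgeSet_deleteIncidenceSet_lt hvw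
      have := (hC.transfer (deleteIncidenceSet_le G w) hCw).critDiff_eq (by omega)
      rw [critDiff_deleteIncidenceSet hvw hv, hα] at this
      omega
  · simp only [not_exists, not_and, not_forall, exists_prop] at hleaf
    exact critDiff_eq_alphaG_sub_matchNum_of_forall_adj_mem_edges hC.1
      (fun _ _ ↦ hC.adj_mem_edges hleaf) hKE
termination_by G.edgeSet.ncard

theorem stmt15_general {V : Type*} (G : SimpleGraph V) [Fintype V] [DecidableEq V]
    (u : V) (C : G.Walk u u) (hC : C.IsCycle)
    (huniq : ∀ (u' : V) (C' : G.Walk u' u'), C'.IsCycle →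
      C'.edges.toFinset = C.edges.toFinset)
    (hnonKE : alphaG G + matchNum G ≠ Fintype.card V) :
    critDiff G = (alphaG G : ℤ) - (matchNum G : ℤ) :=
  Walk.IsOnlyCycle.critDiff_eq ⟨hC, fun v D hD e ↦ by
    rw [← List.mem_toFinset, huniq v D hD, List.mem_toFinset]⟩ hnonKE

/-- for a unicyclic non-König-Egerváry graph, `d_c(G) = α(G) - μ(G)`. -/
theorem stmt15 {V : Type*} (G : SimpleGraph V) [Fintype V] [DecidableEq V] [DecidableRel G.Adj]
    (u : V) (C : G.Walk u u) (hC : C.IsCycle)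
    (huniq : ∀ (u' : V) (C' : G.Walk u' u'), C'.IsCycle →
      C'.edges.toFinset = C.edges.toFinset)
    (hnonKE : alphaG G + matchNum G ≠ Fintype.card V) :
    critDiff G = (alphaG G : ℤ) - (matchNum G : ℤ) :=
  stmt15_general G u C hC huniq hnonKE
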